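/- arXiv:2006.16423 — 3 statements merged into one kernel-verified Lean document; each statement's English description precedes it below -/
import Mathlib

section
/- Let G be a directed graph and S a subset of vertices. S is contiguous (i.e., there do not exist u ∈ S, v ∉ S, w ∈ S with v reachable from u and w reachable from v) if and only if S can be written as I \ I' where I' ⊆ I and both I and I' are ideals (downward-closed sets: for every edge (u,v) with v in the set, u is also in the set). -/
def IsIdeal {V : Type*} (E : V → V → Prop) (I : Set V) : Prop :=
  ∀ u v, E u v → v ∈ I → u ∈ I

def IsContig {V : Type*} (E : V → V → Prop) (S : Set V) : Prop :=
  ¬ ∃ u v w, u ∈ S ∧ v ∉ S ∧ w ∈ S ∧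
    Relation.ReflTransGen E u v ∧ Relation.ReflTransGen E v w

lemma ideal_reach {V : Type*} {E : V → V → Prop} {I : Set V} (hI : IsIdeal E I)
    {a b : V} (h : Relation.ReflTransGen E a b) (hb : b ∈ I) : a ∈ I := by
  induction h using Relation.ReflTransGen.head_induction_on with
  | refl => exact hb
  | head h _ ih => exact hI _ _ h ih

theorem stmt_0 {V : Type*} (E : V → V → Prop) (S : Set V) :
    IsContig E S ↔
      ∃ I I' : Set V, IsIdeal E I ∧ IsIdeal E I' ∧ I' ⊆ I ∧ S = I \ I' := by
  constructor
  · intro hC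
    refine ⟨{v | ∃ w ∈ S, Relation.ReflTransGen E v w},
      {v | (∃ w ∈ S, Relation.ReflTransGen E v w) ∧ v ∉ S}, ?_, ?_, ?_, ?_⟩
    · rintro u v huv ⟨w, hw, hvw⟩
      exact ⟨w, hw, Relation.ReflTransGen.head huv hvw⟩
    · rintro u v huv ⟨⟨w, hw, hvw⟩, hvS⟩
      refine ⟨⟨w, hw, Relation.ReflTransGen.head huv hvw⟩, fun huS => ?_⟩
      exact hC ⟨u, v, w, huS, hvS, hw, Relation.ReflTransGen.single huv, hvw⟩
    · exact fun v hv => hv.1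
    · ext v
      simp only [Set.mem_diff, Set.mem_setOf_eq]
      constructor
      · intro hv
        exact ⟨⟨v, hv, Relation.ReflTransGen.refl⟩, fun h => h.2 hv⟩
      · rintro ⟨h1, h2⟩
        by_contra hvS
        exact h2 ⟨h1, hvS⟩
  · rintro ⟨I, I', hI, hI', hsub, rfl⟩
    rintro ⟨u, v, w, hu, hv, hw, huv, hvw⟩
    have hvI : v ∈ I := ideal_reach hI hvw hw.1
    have hvI' : v ∈ I' := by
      by_contra h; exact hv ⟨hvI, h⟩
    exact hu.2 (ideal_reach hI' huv hvI')
end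

section
/- Let G = (V,E) be a directed graph with x : V → {0,1} indicating membership in a set S = {v : x(v) = 1}. Then S is contiguous if and only if there exists z : V → {0,1} satisfying: (1) z(v) ≥ x(v) for all v; (2) z(v) ≤ z(u) for every edge (u,v); (3) z(v) ≤ x(v) − x(u) + 1 for every edge (u,v). -/
theorem stmt_2 {V : Type*} (E : V → V → Prop) (x : V → ℤ)
    (hx : ∀ v, x v = 0 ∨ x v = 1) :
    IsContig E {v | x v = 1} ↔
      ∃ z : V → ℤ,
        (∀ v, z v = 0 ∨ z v = 1) ∧
        (∀ v, x v ≤ z v) ∧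
        (∀ u v, E u v → z v ≤ z u) ∧
        (∀ u v, E u v → z v ≤ x v - x u + 1) := by
  classical
  constructor
  · intro hC
    refine ⟨fun v => if ∃ w, x w = 1 ∧ Relation.ReflTransGen E v w then 1 else 0,
      fun v => by by_cases h : ∃ w, x w = 1 ∧ Relation.ReflTransGen E v w <;> simp [h],
      ?_, ?_, ?_⟩
    · intro v
      rcases hx v with h | h
      · by_cases h' : ∃ w, x w = 1 ∧ Relation.ReflTransGen E v w <;> simp [h, h']
      · have : ∃ w, x w = 1 ∧ Relation.ReflTransGen E v w :=
          ⟨v, h, Relation.ReflTransGen.refl⟩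
        simp [h, this]
    · intro u v huv
      dsimp only
      by_cases h : ∃ w, x w = 1 ∧ Relation.ReflTransGen E v w
      · obtain ⟨w, hw, hr⟩ := h
        have h' : ∃ w, x w = 1 ∧ Relation.ReflTransGen E u w :=
          ⟨w, hw, Relation.ReflTransGen.head huv hr⟩
        rw [if_pos ⟨w, hw, hr⟩, if_pos h']
      · rw [if_neg h]
        split <;> norm_num
    · intro u v huv
      dsimp only
      by_cases h : ∃ w, x w = 1 ∧ Relation.ReflTransGen E v w
      · rw [if_pos h]
        obtain ⟨w, hw, hr⟩ := h
        rcases hx u with hu | hu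
        · rcases hx v with hv | hv <;> omega
        · rcases hx v with hv | hv
          · exfalso
            exact hC ⟨u, v, w, hu, by simp [hv], hw,
              Relation.ReflTransGen.single huv, hr⟩
          · omega
      · rw [if_neg h]
        rcases hx u with hu | hu <;> rcases hx v with hv | hv <;> omega
  · rintro ⟨z, hz01, hxz, hmono, hedge⟩ ⟨u, v, w, hu, hv, hw, huv, hvw⟩
    simp only [Set.mem_setOf_eq] at hu hv hw
    -- z is nonincreasing along reachability
    have hreach : ∀ {a b : V}, Relation.ReflTransGen E a b → z b ≤ z a := by
      intro a b h
      induction h with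
      | refl => exact le_refl _
      | tail _ he ih => exact le_trans (hmono _ _ he) ih
    -- after passing an exit edge, z is ≤ 0
    have hzero : ∀ {a b : V}, Relation.ReflTransGen E a b → x a = 1 → x b = 0 → z b ≤ 0 := by
      intro a b h
      induction h with
      | refl => intro h1 h0; omega
      | @tail c d _ he ih =>
        intro h1 h0
        rcases hx c with hc | hc
        · exact le_trans (hmono _ _ he) (ih h1 hc)
        · have := hedge _ _ he
          omega
    have hv0 : x v = 0 := by rcases hx v with h | h; exact h; exact absurd h hv
    have h1 : z v ≤ 0 := hzero huv hu hv0
    have h2 : z w ≤ z v := hreach hvw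
    have h3 : x w ≤ z w := hxz w
    omega
end

section
/- If I' ⊆ I are ideals of a directed graph G and the set difference I \ I' is contiguous, and J is any ideal with I' ⊆ J ⊆ I, then both J \ I' and I \ J are contiguous. -/
lemma ideal_rtg {V : Type*} {E : V → V → Prop} {I : Set V} (hI : IsIdeal E I)
    {u v : V} (h : Relation.ReflTransGen E u v) (hv : v ∈ I) : u ∈ I := by
  induction h with
  | refl => exact hv
  | tail _ hbc ih => exact ih (hI _ _ hbc hv)

theorem stmt_6 {V : Type*} (E : V → V → Prop) {I I' J : Set V}
    (hI : IsIdeal E I) (hI' : IsIdeal E I') (hJ : IsIdeal E J)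
    (hsub : I' ⊆ I) (hcont : IsContig E (I \ I'))
    (hJ1 : I' ⊆ J) (hJ2 : J ⊆ I) :
    IsContig E (J \ I') ∧ IsContig E (I \ J) := by
  constructor
  · rintro ⟨u, v, w, ⟨huJ, huI'⟩, hv, ⟨hwJ, hwI'⟩, huv, hvw⟩
    by_cases hvI' : v ∈ I'
    · exact huI' (ideal_rtg hI' huv hvI')
    · exact hv ⟨ideal_rtg hJ hvw hwJ, hvI'⟩
  · rintro ⟨u, v, w, ⟨huI, huJ⟩, hv, ⟨hwI, hwJ⟩, huv, hvw⟩
    by_cases hvJ : v ∈ J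
    · exact huJ (ideal_rtg hJ huv hvJ)
    · exact hv ⟨ideal_rtg hI hvw hwI, hvJ⟩
end
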